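/- arXiv:math/0502333 — 2 statements merged into one kernel-verified Lean document; each statement's English description precedes it below -/
import Mathlib

section
/- Let q be real with 0 < q < 1, h an integer, r ≥ 1, w a natural number, and α_1,…,α_r positive integers (with all quantities jα_l + h - l + 1 nonzero for 0 ≤ j ≤ n). Define β_n^{(h,r)}(w, q | α_1,…,α_r) = (1/(1-q)^n) Σ_{j=0}^{n} C(n,j)(-q^w)^j ∏_{l=1}^{r} (jα_l + h - l + 1)/[jα_l + h - l + 1], and β_j^{(h,r)}(q|α) = β_j^{(h,r)}(0, q|α). Then β_n^{(h,r)}(w, q | α_1,…,α_r) = Σ_{j=0}^{n} C(n,j) q^{wj} β_j^{(h,r)}(q | α_1,…,α_r) [w]^{n-j}, where [w] = (1-q^w)/(1-q). -/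
open Finset

/-- q-integer `[m] = (1-q^m)/(1-q)` for an integer exponent. -/
noncomputable def qint (q : ℝ) (m : ℤ) : ℝ := (1 - q ^ m) / (1 - q)

/-- The extended Changhee q-Bernoulli polynomial `β_n^{(h,r)}(w, q | α_1,…,α_r)`,
with the weights indexed by `l ∈ {0,…,r-1}` representing `α_{l+1}`. -/
noncomputable def changheeBetaPoly (q : ℝ) (h : ℤ) (r : ℕ) (α : ℕ → ℤ) (w : ℕ) (n : ℕ) : ℝ :=
  (1 / (1 - q) ^ n) *
    ∑ j ∈ Finset.range (n + 1),
      (n.choose j : ℝ) * (-(q ^ w)) ^ j *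
        ∏ l ∈ Finset.range r,
          (((j : ℤ) * α l + h - l : ℤ) : ℝ) / qint q ((j : ℤ) * α l + h - l)

/-!
With `x = q^w` and `P j = ∏_l (jα_l + h - l + 1)/[jα_l + h - l + 1]`, after pulling out
`(1-q)^{-n}` the claim becomes the identity
`∑_j C(n,j) x^j (1-x)^{n-j} ∑_i C(j,i) (-1)^i P i = ∑_i C(n,i) (-x)^i P i`.
Exchanging the two sums reduces it to `∑_j C(n,j) C(j,i) x^j (1-x)^{n-j} = C(n,i) x^i`,
which follows from `C(n,j) C(j,i) = C(n,i) C(n-i,j-i)` and the binomial theorem for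
`(x + (1-x))^{n-i}`.
-/

section BinomialIdentities

variable {R : Type*} [CommRing R]

theorem sum_choose_mul_choose_mul_pow_mul_one_sub_pow (x : R) (n i : ℕ) :
    ∑ j ∈ range (n + 1), (n.choose j * j.choose i : R) * x ^ j * (1 - x) ^ (n - j) =
      n.choose i * x ^ i := by
  rcases lt_or_ge n i with hni | hin
  · rw [Nat.choose_eq_zero_of_lt hni, Nat.cast_zero, zero_mul]
    exact sum_eq_zero fun j hj => by
      simp [Nat.choose_eq_zero_of_lt (show j < i by rw [mem_range] at hj; omega)]
  obtain ⟨m, rfl⟩ := Nat.exists_eq_add_of_le hin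
  have hbelow : ∑ j ∈ range i,
      ((i + m).choose j * j.choose i : R) * x ^ j * (1 - x) ^ (i + m - j) = 0 :=
    sum_eq_zero fun j hj => by
      simp [Nat.choose_eq_zero_of_lt (mem_range.mp hj)]
  have hchoose : ∀ k, ((i + m).choose (i + k) * (i + k).choose i : R) =
      (i + m).choose i * m.choose k := fun k => by
    have := Nat.choose_mul (n := i + m) (k := i + k) (s := i) (by omega)
    rw [Nat.add_sub_cancel_left, Nat.add_sub_cancel_left] at this
    rw [← Nat.cast_mul, ← Nat.cast_mul, this]
  rw [add_assoc, sum_range_add, hbelow, zero_add]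
  calc ∑ k ∈ range (m + 1), ((i + m).choose (i + k) * (i + k).choose i : R) *
          x ^ (i + k) * (1 - x) ^ (i + m - (i + k))
      = (i + m).choose i * x ^ i * ∑ k ∈ range (m + 1), x ^ k * (1 - x) ^ (m - k) * m.choose k := by
        rw [mul_sum]
        refine sum_congr rfl fun k _ => ?_
        rw [hchoose, Nat.add_sub_add_left, pow_add]
        ring
    _ = (i + m).choose i * x ^ i := by rw [← add_pow, add_sub_cancel, one_pow, mul_one]

def alternatingBinomialSum (a : ℕ → R) (x : R) (n : ℕ) : R :=
  ∑ i ∈ range (n + 1), (n.choose i : R) * (-x) ^ i * a i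

theorem sum_choose_mul_pow_mul_alternatingBinomialSum_one (a : ℕ → R) (x : R) (n : ℕ) :
    ∑ j ∈ range (n + 1),
        (n.choose j : R) * x ^ j * alternatingBinomialSum a 1 j * (1 - x) ^ (n - j) =
      alternatingBinomialSum a x n := by
  have hextend : ∀ j ∈ range (n + 1), alternatingBinomialSum a 1 j =
      ∑ i ∈ range (n + 1), (j.choose i : R) * (-1) ^ i * a i := fun j hj =>
    sum_subset (range_subset_range.mpr (by rw [mem_range] at hj; omega)) fun i _ hi => by
      simp [Nat.choose_eq_zero_of_lt (by simpa using hi : j < i)]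
  calc ∑ j ∈ range (n + 1),
          (n.choose j : R) * x ^ j * alternatingBinomialSum a 1 j * (1 - x) ^ (n - j)
      = ∑ j ∈ range (n + 1), ∑ i ∈ range (n + 1),
          (-1) ^ i * a i * ((n.choose j * j.choose i : R) * x ^ j * (1 - x) ^ (n - j)) :=
        sum_congr rfl fun j hj => by
          rw [hextend j hj, mul_sum, sum_mul]
          exact sum_congr rfl fun i _ => by ring
    _ = ∑ i ∈ range (n + 1), (-1) ^ i * a i * ∑ j ∈ range (n + 1),
          (n.choose j * j.choose i : R) * x ^ j * (1 - x) ^ (n - j) := by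
        rw [sum_comm]
        exact sum_congr rfl fun i _ => (mul_sum ..).symm
    _ = alternatingBinomialSum a x n :=
        sum_congr rfl fun i _ => by
          rw [sum_choose_mul_choose_mul_pow_mul_one_sub_pow, neg_pow]
          ring

end BinomialIdentities

noncomputable def changheeWeight (q : ℝ) (h : ℤ) (r : ℕ) (α : ℕ → ℤ) (j : ℕ) : ℝ :=
  ∏ l ∈ range r, (((j : ℤ) * α l + h - l : ℤ) : ℝ) / qint q ((j : ℤ) * α l + h - l)

theorem changheeBetaPoly_eq (q : ℝ) (h : ℤ) (r : ℕ) (α : ℕ → ℤ) (w n : ℕ) :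
    changheeBetaPoly q h r α w n =
      (1 - q)⁻¹ ^ n * alternatingBinomialSum (changheeWeight q h r α) (q ^ w) n := by
  rw [changheeBetaPoly, one_div, inv_pow]
  rfl

theorem changhee_addition_formula_general (q : ℝ)
    (h : ℤ) (r : ℕ) (α : ℕ → ℤ)
    (n : ℕ) (w : ℕ) :
    changheeBetaPoly q h r α w n =
      ∑ j ∈ Finset.range (n + 1),
        (n.choose j : ℝ) * q ^ (w * j) * changheeBetaPoly q h r α 0 j *
          ((1 - q ^ w) / (1 - q)) ^ (n - j) := by
  set c := (1 - q)⁻¹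
  simp only [changheeBetaPoly_eq, pow_zero, div_eq_mul_inv (1 - q ^ w), pow_mul]
  rw [← sum_choose_mul_pow_mul_alternatingBinomialSum_one, mul_sum]
  refine sum_congr rfl fun j hj => ?_
  have hsplit : c ^ n = c ^ j * c ^ (n - j) := by
    rw [← pow_add, Nat.add_sub_cancel' (Nat.lt_succ_iff.mp (mem_range.mp hj))]
  rw [hsplit, mul_pow]
  ring

theorem changhee_addition_formula (q : ℝ) (hq0 : 0 < q) (hq1 : q < 1)
    (h : ℤ) (r : ℕ) (hr : 1 ≤ r) (α : ℕ → ℤ) (hα : ∀ l ∈ Finset.range r, 0 < α l)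
    (n : ℕ) (w : ℕ)
    (hnz : ∀ j : ℕ, j ≤ n → ∀ l ∈ Finset.range r, (j : ℤ) * α l + h - l ≠ 0) :
    changheeBetaPoly q h r α w n =
      ∑ j ∈ Finset.range (n + 1),
        (n.choose j : ℝ) * q ^ (w * j) * changheeBetaPoly q h r α 0 j *
          ((1 - q ^ w) / (1 - q)) ^ (n - j) :=
  changhee_addition_formula_general q h r α n w
end

section
/- Let p be a prime, q ∈ Z_p with |q-1|_p < p^{-1/(p-1)}, q ≠ 1, let h be an integer and n, α natural numbers with α ≥ 1. Then the p-adic limit lim_{N→∞} (1/[p^N]) Σ_{x=0}^{p^N - 1} q^{hx} [αx]^n exists and equals (1/(1-q)^n) Σ_{j=0}^{n} C(n,j)(-1)^j (jα + h)/[jα + h], provided jα + h ≠ 0 for 0 ≤ j ≤ n. Here [m] = (1-q^m)/(1-q) and q^x = exp(x log q). -/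
/-!
Expanding `[αx]^n` binomially turns the Riemann sum into a combination of geometric sums
`∑_{x < p^N} (q^m)^x` with `m = jα + h`. Since `q^m ≠ 1` these have closed forms, and the `j`-th
term becomes `(1 - q)/(1 - q^m) · [m]_u` with `u = q^(p^N)`. Now `[m]_u → m` as `u → 1` (it is
the difference quotient of `u ↦ u^m` at `1`), and `q^(p^N) → 1` because the hypothesis on `q`
gives `|q^p - 1| = |q - 1|/p` (the linear term of the binomial expansion dominates).
Together with `|q^u - 1| = |q - 1|` for `p ∤ u`, this also shows that no power `q^m` with
`m ≠ 0` equals `1`.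
-/

open Filter Finset Topology

lemma pow_lt_inv_of_lt_rpow {p : ℕ} (hp : 1 < p) {r : ℝ} (hr0 : 0 ≤ r)
    (hr : r < (p : ℝ) ^ (-(1 : ℝ) / (p - 1))) : r ^ (p - 1) < (p : ℝ)⁻¹ := by
  have hp1 : (0 : ℝ) < p - 1 := by
    rw [sub_pos]; exact_mod_cast hp
  calc r ^ (p - 1) < ((p : ℝ) ^ (-(1 : ℝ) / (p - 1))) ^ (p - 1) :=
        pow_lt_pow_left₀ hr hr0 (by omega)
    _ = (p : ℝ)⁻¹ := by
        rw [← Real.rpow_natCast, ← Real.rpow_mul (by positivity), Nat.cast_sub hp.le,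
          Nat.cast_one, div_mul_cancel₀ _ hp1.ne', Real.rpow_neg_one]

lemma tendsto_one_sub_zpow_div_one_sub {𝕜 : Type*} [NontriviallyNormedField 𝕜] (m : ℤ) :
    Tendsto (fun u : 𝕜 => (1 - u ^ m) / (1 - u)) (𝓝[≠] 1) (𝓝 m) := by
  have hderiv := hasDerivAt_iff_tendsto_slope.1 (hasDerivAt_zpow m (1 : 𝕜) (Or.inl one_ne_zero))
  rw [one_zpow, mul_one] at hderiv
  refine hderiv.congr fun u => ?_
  rw [slope_def_field, one_zpow, ← neg_div_neg_eq, neg_sub, neg_sub]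

lemma IsUltrametricDist.norm_pow_sub_one_le {K : Type*} [NormedDivisionRing K]
    [IsUltrametricDist K] {x : K} (hx : ‖x - 1‖ < 1) (i : ℕ) : ‖x ^ i - 1‖ ≤ ‖x - 1‖ := by
  have hx1 : ‖x‖ ≤ 1 := by
    simpa using (norm_add_one_le_max_norm_one (x - 1)).trans (max_le hx.le le_rfl)
  rw [← geom_sum_mul, norm_mul]
  refine mul_le_of_le_one_left (norm_nonneg _) ?_
  exact norm_sum_le_of_forall_le_of_nonneg zero_le_one
    fun l _ => by simpa only [norm_pow] using pow_le_one₀ (norm_nonneg x) hx1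

section Field

variable {K : Type*} [Field K]

lemma zpow_mul_pow_eq {q : K} (hq : q ≠ 0) (h : ℤ) (α j x : ℕ) :
    q ^ (h * x) * (q ^ (α * x)) ^ j = (q ^ ((j : ℤ) * α + h)) ^ x := by
  rw [← pow_mul, ← zpow_natCast q, ← zpow_add₀ hq, ← zpow_natCast, ← zpow_mul]
  push_cast
  ring_nf

lemma zpow_mul_one_sub_pow_div_pow_eq_sum {q : K} (hq : q ≠ 0) (h : ℤ) (α n x : ℕ) :
    q ^ (h * x) * ((1 - q ^ (α * x)) / (1 - q)) ^ n =
      1 / (1 - q) ^ n *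
        ∑ j ∈ range (n + 1), (n.choose j : K) * (-1) ^ j * (q ^ ((j : ℤ) * α + h)) ^ x := by
  rw [div_pow, sub_eq_neg_add, add_pow, sum_div, mul_sum, mul_sum]
  refine sum_congr rfl fun j _ => ?_
  rw [← zpow_mul_pow_eq hq, neg_pow]
  ring

lemma geom_sum_zpow_eq {q : K} {m : ℤ} (hm : q ^ m ≠ 1) (M : ℕ) :
    ∑ x ∈ range M, (q ^ m) ^ x = (1 - (q ^ M) ^ m) / (1 - q ^ m) := by
  rw [geom_sum_eq hm, ← neg_div_neg_eq, neg_sub, neg_sub, ← zpow_natCast, ← zpow_natCast,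
    ← zpow_mul, ← zpow_mul, mul_comm]

lemma q_riemann_sum_eq_sum_choose {q : K} (hq : q ≠ 0) (h : ℤ) (α n M : ℕ)
    (hm : ∀ j ≤ n, q ^ ((j : ℤ) * α + h) ≠ 1) :
    (1 - q) / (1 - q ^ M) * ∑ x ∈ range M, q ^ (h * x) * ((1 - q ^ (α * x)) / (1 - q)) ^ n =
      1 / (1 - q) ^ n * ∑ j ∈ range (n + 1), (n.choose j : K) * (-1) ^ j *
        ((1 - q) / (1 - q ^ ((j : ℤ) * α + h))) *
          ((1 - (q ^ M) ^ ((j : ℤ) * α + h)) / (1 - q ^ M)) := by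
  simp_rw [zpow_mul_one_sub_pow_div_pow_eq_sum hq, ← mul_sum]
  rw [sum_comm, mul_left_comm, mul_sum, mul_sum, mul_sum]
  refine sum_congr rfl fun j hj => ?_
  rw [← mul_sum (range M), geom_sum_zpow_eq (hm j (Nat.lt_succ_iff.1 (mem_range.1 hj)))]
  ring

end Field

namespace Padic

variable {p : ℕ} [hp : Fact p.Prime]

lemma norm_lt_one_of_norm_pow_lt {y : ℚ_[p]} (hy : ‖y‖ ^ (p - 1) < (p : ℝ)⁻¹) : ‖y‖ < 1 := by
  by_contra! h
  have hp1 : (p : ℝ)⁻¹ < 1 := inv_lt_one_of_one_lt₀ (mod_cast hp.out.one_lt)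
  linarith [one_le_pow₀ (n := p - 1) h]

lemma norm_pow_sub_one_pow_lt {x : ℚ_[p]} (hx : ‖x - 1‖ ^ (p - 1) < (p : ℝ)⁻¹) (m : ℕ) :
    ‖x ^ m - 1‖ ^ (p - 1) < (p : ℝ)⁻¹ :=
  (pow_le_pow_left₀ (norm_nonneg _)
    (IsUltrametricDist.norm_pow_sub_one_le (norm_lt_one_of_norm_pow_lt hx) m) _).trans_lt hx

lemma norm_geom_sum_eq_one {x : ℚ_[p]} (hx : ‖x - 1‖ < 1) {u : ℕ} (hu : ¬p ∣ u) :
    ‖∑ i ∈ range u, x ^ i‖ = 1 := by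
  have hu1 : ‖(u : ℚ_[p])‖ = 1 :=
    norm_natCast_eq_one_iff.2 ((Nat.Prime.coprime_iff_not_dvd hp.out).2 hu)
  rw [← hu1]
  refine norm_eq_of_norm_sub_lt_right ?_
  have hsub : ∑ i ∈ range u, x ^ i - u = ∑ i ∈ range u, (x ^ i - 1) := by
    simp [sum_sub_distrib]
  rw [hu1, hsub]
  exact (IsUltrametricDist.norm_sum_le_of_forall_le_of_nonneg (norm_nonneg _)
    fun i _ => IsUltrametricDist.norm_pow_sub_one_le hx i).trans_lt hx

lemma norm_pow_sub_one_of_not_dvd {x : ℚ_[p]} (hx : ‖x - 1‖ < 1) {u : ℕ} (hu : ¬p ∣ u) :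
    ‖x ^ u - 1‖ = ‖x - 1‖ := by
  rw [← geom_sum_mul, norm_mul, norm_geom_sum_eq_one hx hu, one_mul]

lemma norm_choose_mul_pow_lt {s : ℚ_[p]} (hs0 : s ≠ 0) (hs : ‖s‖ ^ (p - 1) < (p : ℝ)⁻¹)
    {k : ℕ} (hk2 : 2 ≤ k) (hkp : k ≤ p) : ‖(p.choose k : ℚ_[p]) * s ^ k‖ < ‖s‖ / p := by
  have hs_pos : 0 < ‖s‖ := norm_pos_iff.2 hs0
  rw [div_eq_inv_mul, norm_mul, norm_pow]
  rcases hkp.eq_or_lt with rfl | hkp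
  · rw [Nat.choose_self, Nat.cast_one, norm_one, one_mul, ← pow_sub_one_mul hp.out.ne_zero]
    exact mul_lt_mul_of_pos_right hs hs_pos
  · have hchoose : ‖(p.choose k : ℚ_[p])‖ ≤ (p : ℝ)⁻¹ := by
      obtain ⟨c, hc⟩ := hp.out.dvd_choose_self (by omega) hkp
      rw [hc, Nat.cast_mul, norm_mul, norm_p]
      exact mul_le_of_le_one_right (by positivity) (by simpa using norm_int_le_one (c : ℤ))
    have hpow : ‖s‖ ^ k < ‖s‖ :=
      pow_lt_self_of_lt_one₀ hs_pos (norm_lt_one_of_norm_pow_lt hs) (by omega)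
    exact mul_lt_mul_of_le_of_lt_of_nonneg_of_pos hchoose hpow (by positivity)
      (inv_pos.2 (mod_cast hp.out.pos))

lemma norm_pow_prime_sub_one {x : ℚ_[p]} (hx : ‖x - 1‖ ^ (p - 1) < (p : ℝ)⁻¹) :
    ‖x ^ p - 1‖ = ‖x - 1‖ / p := by
  obtain rfl | hx1 := eq_or_ne x 1
  · simp
  set s := x - 1
  have hexp : x ^ p - 1 = p * s + ∑ k ∈ Ico 2 (p + 1), (p.choose k : ℚ_[p]) * s ^ k := by
    have hbinom : x ^ p = ∑ k ∈ range (p + 1), (p.choose k : ℚ_[p]) * s ^ k := by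
      rw [show x = s + 1 by ring, add_pow]
      exact sum_congr rfl fun k _ => by rw [one_pow]; ring
    rw [hbinom, range_eq_Ico, sum_eq_sum_Ico_succ_bot (by omega : 0 < p + 1),
      sum_eq_sum_Ico_succ_bot (by simp [hp.out.pos] : 1 < p + 1)]
    simp only [pow_zero, pow_one, Nat.choose_zero_right, Nat.choose_one_right, Nat.cast_one]
    ring
  have hps : ‖(p : ℚ_[p]) * s‖ = ‖s‖ / p := by rw [norm_mul, norm_p, inv_mul_eq_div]
  rw [← hps]
  refine norm_eq_of_norm_sub_lt_right ?_
  rw [hexp, add_sub_cancel_left, hps]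
  obtain ⟨k, hk, hle⟩ := IsUltrametricDist.exists_norm_finsetSum_le_of_nonempty
    (nonempty_Ico.2 (by linarith [hp.out.two_le] : 2 < p + 1)) fun k => (p.choose k : ℚ_[p]) * s ^ k
  rw [mem_Ico] at hk
  exact hle.trans_lt (norm_choose_mul_pow_lt (sub_ne_zero.2 hx1) hx hk.1 (by omega))

lemma norm_pow_prime_pow_sub_one {x : ℚ_[p]} (hx : ‖x - 1‖ ^ (p - 1) < (p : ℝ)⁻¹) :
    ∀ N : ℕ, ‖x ^ p ^ N - 1‖ = ‖x - 1‖ / p ^ N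
  | 0 => by simp
  | N + 1 => by
    rw [pow_succ, pow_mul, norm_pow_prime_sub_one (norm_pow_sub_one_pow_lt hx _),
      norm_pow_prime_pow_sub_one hx N, div_div, ← pow_succ]

lemma pow_ne_one_of_norm_sub_one_pow_lt {x : ℚ_[p]} (hx : ‖x - 1‖ ^ (p - 1) < (p : ℝ)⁻¹)
    (hx1 : x ≠ 1) {m : ℕ} (hm : m ≠ 0) : x ^ m ≠ 1 := by
  obtain ⟨k, u, hu, rfl⟩ := Nat.exists_eq_pow_mul_and_not_dvd hm p hp.out.ne_one
  rw [← sub_ne_zero, ← norm_ne_zero_iff, pow_mul, norm_pow_sub_one_of_not_dvd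
    (norm_lt_one_of_norm_pow_lt (norm_pow_sub_one_pow_lt hx _)) hu, norm_pow_prime_pow_sub_one hx]
  exact div_ne_zero (norm_ne_zero_iff.2 (sub_ne_zero.2 hx1))
    (pow_ne_zero _ (mod_cast hp.out.ne_zero))

lemma zpow_ne_one_of_norm_sub_one_pow_lt {x : ℚ_[p]} (hx : ‖x - 1‖ ^ (p - 1) < (p : ℝ)⁻¹)
    (hx1 : x ≠ 1) {m : ℤ} (hm : m ≠ 0) : x ^ m ≠ 1 := by
  obtain ⟨k, rfl | rfl⟩ := Int.eq_nat_or_neg m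
  · rw [zpow_natCast]
    exact pow_ne_one_of_norm_sub_one_pow_lt hx hx1 (by omega)
  · rw [zpow_neg, zpow_natCast, ne_eq, inv_eq_one]
    exact pow_ne_one_of_norm_sub_one_pow_lt hx hx1 (by omega)

lemma tendsto_pow_prime_pow_nhdsNE_one {x : ℚ_[p]} (hx : ‖x - 1‖ ^ (p - 1) < (p : ℝ)⁻¹)
    (hx1 : x ≠ 1) : Tendsto (fun N : ℕ => x ^ p ^ N) atTop (𝓝[≠] 1) := by
  refine tendsto_nhdsWithin_iff.2 ⟨?_, Eventually.of_forall fun N =>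
    pow_ne_one_of_norm_sub_one_pow_lt hx hx1 (pow_pos hp.out.pos N).ne'⟩
  rw [tendsto_iff_norm_sub_tendsto_zero]
  simp_rw [norm_pow_prime_pow_sub_one hx, div_eq_mul_inv, ← inv_pow]
  simpa using (tendsto_pow_atTop_nhds_zero_of_lt_one (by positivity)
    (inv_lt_one_of_one_lt₀ (mod_cast hp.out.one_lt : (1 : ℝ) < p))).const_mul ‖x - 1‖

end Padic

theorem padic_q_integral_beta_h_general (p : ℕ) [Fact p.Prime] (q : ℤ_[p])
    (hq : ‖(q : ℚ_[p]) - 1‖ < (p : ℝ) ^ (-(1 : ℝ) / (p - 1))) (hq1 : q ≠ 1)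
    (h : ℤ) (n α : ℕ)
    (hnz : ∀ j : ℕ, j ≤ n → (j : ℤ) * α + h ≠ 0) :
    Tendsto
      (fun N : ℕ =>
        ((1 - (q : ℚ_[p])) / (1 - (q : ℚ_[p]) ^ (p ^ N))) *
          ∑ x ∈ Finset.range (p ^ N),
            (q : ℚ_[p]) ^ (h * x) *
              ((1 - (q : ℚ_[p]) ^ (α * x)) / (1 - (q : ℚ_[p]))) ^ n)
      atTop
      (nhds ((1 / (1 - (q : ℚ_[p])) ^ n) *
        ∑ j ∈ Finset.range (n + 1),
          (n.choose j : ℚ_[p]) * (-1) ^ j *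
            ((((j : ℤ) * α + h : ℤ) : ℚ_[p]) /
              ((1 - (q : ℚ_[p]) ^ ((j : ℤ) * α + h)) / (1 - (q : ℚ_[p])))))) := by
  have hQ1 : (q : ℚ_[p]) ≠ 1 := fun h1 => hq1 (PadicInt.ext h1)
  set Q : ℚ_[p] := (q : ℚ_[p])
  have hQ : ‖Q - 1‖ ^ (p - 1) < (p : ℝ)⁻¹ :=
    pow_lt_inv_of_lt_rpow (Fact.out : p.Prime).one_lt (norm_nonneg _) hq
  have hQ0 : Q ≠ 0 := by
    intro h0
    simpa [h0] using Padic.norm_lt_one_of_norm_pow_lt hQ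
  have hm : ∀ j ≤ n, Q ^ ((j : ℤ) * α + h) ≠ 1 := fun j hj =>
    Padic.zpow_ne_one_of_norm_sub_one_pow_lt hQ hQ1 (hnz j hj)
  simp_rw [q_riemann_sum_eq_sum_choose hQ0 h α n _ hm]
  refine (tendsto_finsetSum _ fun j _ => ?_).const_mul _
  have hlim : Tendsto (fun N : ℕ => (1 - (Q ^ p ^ N) ^ ((j : ℤ) * α + h)) / (1 - Q ^ p ^ N))
      atTop (𝓝 (((j : ℤ) * α + h : ℤ) : ℚ_[p])) :=
    (tendsto_one_sub_zpow_div_one_sub _).comp (Padic.tendsto_pow_prime_pow_nhdsNE_one hQ hQ1)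
  convert hlim.const_mul ((n.choose j : ℚ_[p]) * (-1) ^ j * ((1 - Q) / (1 - Q ^ ((j : ℤ) * α + h))))
    using 2
  rw [div_div_eq_mul_div]
  ring

theorem padic_q_integral_beta_h (p : ℕ) [Fact p.Prime] (q : ℤ_[p])
    (hq : ‖(q : ℚ_[p]) - 1‖ < (p : ℝ) ^ (-(1 : ℝ) / (p - 1))) (hq1 : q ≠ 1)
    (h : ℤ) (n α : ℕ) (hα : 1 ≤ α)
    (hnz : ∀ j : ℕ, j ≤ n → (j : ℤ) * α + h ≠ 0) :
    Tendsto
      (fun N : ℕ =>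
        ((1 - (q : ℚ_[p])) / (1 - (q : ℚ_[p]) ^ (p ^ N))) *
          ∑ x ∈ Finset.range (p ^ N),
            (q : ℚ_[p]) ^ (h * x) *
              ((1 - (q : ℚ_[p]) ^ (α * x)) / (1 - (q : ℚ_[p]))) ^ n)
      atTop
      (nhds ((1 / (1 - (q : ℚ_[p])) ^ n) *
        ∑ j ∈ Finset.range (n + 1),
          (n.choose j : ℚ_[p]) * (-1) ^ j *
            ((((j : ℤ) * α + h : ℤ) : ℚ_[p]) /
              ((1 - (q : ℚ_[p]) ^ ((j : ℤ) * α + h)) / (1 - (q : ℚ_[p])))))) :=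
  padic_q_integral_beta_h_general p q hq hq1 h n α hnz
end
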